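/- arXiv:0903.4050 — 2 statements merged into one kernel-verified Lean document; each statement's English description precedes it below -/
import Mathlib

section
/- Every CL trajectory x : ℕ → ℤ is eventually periodic: there exist N and p > 0 such that x(n+p) = x n for all n ≥ N. -/
/-- A CL trajectory: `x (n+2) = (x n + x (n+1)) / 2` when `x n + x (n+1)` is even,
and `x (n+2) = x (n+1) - x n` when it is odd. -/
def IsCLTrajectory (x : ℕ → ℤ) : Prop :=
  ∀ n : ℕ,
    (Even (x n + x (n + 1)) → x (n + 2) = (x n + x (n + 1)) / 2) ∧
    (Odd (x n + x (n + 1)) → x (n + 2) = x (n + 1) - x n)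

private lemma cl_step (x : ℕ → ℤ) (hx : IsCLTrajectory x) (a b : ℕ)
    (h0 : x a = x b) (h1 : x (a + 1) = x (b + 1)) : x (a + 2) = x (b + 2) := by
  rcases Int.even_or_odd (x a + x (a + 1)) with he | ho
  · rw [(hx a).1 he, (hx b).1 (by rw [← h0, ← h1]; exact he), h0, h1]
  · rw [(hx a).2 ho, (hx b).2 (by rw [← h0, ← h1]; exact ho), h0, h1]

private lemma cl_bounded (x : ℕ → ℤ) (hx : IsCLTrajectory x) :
    ∀ n, (x n).natAbs ≤ (x 0).natAbs + (x 1).natAbs + (x 1 - x 0).natAbs := by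
  set B := (x 0).natAbs + (x 1).natAbs + (x 1 - x 0).natAbs with hB
  have key : ∀ n, (x n).natAbs ≤ B ∧ (x (n + 1)).natAbs ≤ B ∧
      (x (n + 1) - x n).natAbs ≤ B := by
    intro n
    induction n with
    | zero => simp only [Nat.zero_add]; refine ⟨?_, ?_, ?_⟩ <;> omega
    | succ n ih =>
      obtain ⟨h1, h2, h3⟩ := ih
      rcases Int.even_or_odd (x n + x (n + 1)) with he | ho
      · obtain ⟨k, hk⟩ := he
        have hx2 : x (n + 2) = k := by
          have := (hx n).1 ⟨k, hk⟩
          omega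
        refine ⟨h2, ?_, ?_⟩ <;> (rw [show n + 1 + 1 = n + 2 from rfl, hx2]; omega)
      · have hx2 := (hx n).2 ho
        refine ⟨h2, ?_, ?_⟩ <;> (rw [show n + 1 + 1 = n + 2 from rfl, hx2]; omega)
  exact fun n => (key n).1

theorem cl_eventually_periodic (x : ℕ → ℤ) (hx : IsCLTrajectory x) :
    ∃ N : ℕ, ∃ p : ℕ, 0 < p ∧ ∀ n ≥ N, x (n + p) = x n := by
  set B := (x 0).natAbs + (x 1).natAbs + (x 1 - x 0).natAbs with hB
  have hbd := cl_bounded x hx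
  have hfin : (Set.Icc (-(B : ℤ)) B ×ˢ Set.Icc (-(B : ℤ)) B).Finite :=
    (Set.finite_Icc _ _).prod (Set.finite_Icc _ _)
  have hmaps : Set.MapsTo (fun n : ℕ => (x n, x (n + 1))) Set.univ
      (Set.Icc (-(B : ℤ)) B ×ˢ Set.Icc (-(B : ℤ)) B) := by
    intro n _
    have h1 := hbd n
    have h2 := hbd (n + 1)
    constructor <;> constructor <;> simp <;> omega
  obtain ⟨a, -, b, -, hab, heq⟩ :=
    Set.infinite_univ.exists_ne_map_eq_of_mapsTo hmaps hfin
  -- wlog a < b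
  obtain ⟨a, b, hlt, h0, h1⟩ : ∃ a b : ℕ, a < b ∧ x a = x b ∧ x (a + 1) = x (b + 1) := by
    rcases Nat.lt_or_ge a b with h | h
    · exact ⟨a, b, h, congrArg Prod.fst heq, congrArg Prod.snd heq⟩
    · exact ⟨b, a, lt_of_le_of_ne h (Ne.symm hab), (congrArg Prod.fst heq).symm,
        (congrArg Prod.snd heq).symm⟩
  have main : ∀ k, x (b + k) = x (a + k) := by
    intro k
    induction k using Nat.strong_induction_on with
    | _ k ih =>
      match k with
      | 0 => simpa using h0.symm
      | 1 => exact h1.symm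
      | (k + 2) =>
        have := cl_step x hx (b + k) (a + k)
          (ih k (by omega)) (by simpa [Nat.add_assoc] using ih (k + 1) (by omega))
        simpa [Nat.add_assoc] using this
  refine ⟨a, b - a, by omega, fun n hn => ?_⟩
  have hk : n + (b - a) = b + (n - a) := by omega
  have hn' : a + (n - a) = n := by omega
  rw [hk, main (n - a), hn']
end

section
/- Let x : ℕ → ℤ be a CL trajectory with gcd(x 0, x 1) = 1 which is periodic, i.e., there exists p > 0 with x(n+p) = x n for all n. Then either x n = 1 for all n, or x n = −1 for all n, or x(n+6) = x n for all n and (x 0, x 1, x 2, x 3, x 4, x 5) is a cyclic rotation of (−2, 1, 3, 2, −1, −3). -/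
open Function Fin.NatCast

variable {x y : ℕ → ℤ} {p n : ℕ}

theorem Int.odd_or_odd_of_isCoprime {a b : ℤ} (h : IsCoprime a b) : Odd a ∨ Odd b := by
  by_contra! hab
  simp only [Int.not_odd_iff_even, even_iff_two_dvd] at hab
  exact absurd (Int.isUnit_iff.mp (h.isUnit_of_dvd' hab.1 hab.2)) (by norm_num)

theorem Antitone.eq_of_periodic {α : Type*} [PartialOrder α] {f : ℕ → α} (hf : Antitone f)
    (hper : Periodic f p) (hp : 0 < p) (n : ℕ) : f n = f 0 := by
  refine le_antisymm (hf (Nat.zero_le n)) ?_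
  calc f 0 = f (n * p) := by simpa using ((hper.nat_mul n) 0).symm
    _ ≤ f n := hf (Nat.le_mul_of_pos_right n hp)

theorem Function.Periodic.exists_eq_shift {α : Type*} {f g : ℕ → α} (hf : Periodic f p)
    (hp : 0 < p) {m k : ℕ} (h : ∀ j, f (m + j) = g (k + j)) : ∃ r, ∀ n, f n = g (n + r) := by
  obtain ⟨q, hq⟩ := Nat.exists_eq_add_of_le (Nat.le_mul_of_pos_right m hp)
  refine ⟨k + q, fun n => ?_⟩
  calc f n = f (m + (n + q)) := by rw [← (hf.nat_mul m) n, Nat.cast_id, hq]; ring_nf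
    _ = g (n + (k + q)) := by rw [h]; ring_nf

/-- Over two consecutive terms the maximum of `|x|` can grow, since an odd sum `a + b` is
followed by `b - a`; over three it cannot (`IsCLTrajectory.antitone_windowMax`). -/
def windowMax (x : ℕ → ℤ) (n : ℕ) : ℤ := max (max |x n| |x (n + 1)|) |x (n + 2)|

theorem abs_window_le_windowMax (x : ℕ → ℤ) (n : ℕ) :
    |x n| ≤ windowMax x n ∧ |x (n + 1)| ≤ windowMax x n ∧ |x (n + 2)| ≤ windowMax x n := by
  simp only [windowMax, le_max_iff, le_refl, true_or, or_true, and_self]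

theorem periodic_windowMax (hper : Periodic x p) : Periodic (windowMax x) p := by
  intro n
  simp only [windowMax, hper n, Nat.add_right_comm n p, hper (n + 1), hper (n + 2)]

def clCycle (n : ℕ) : ℤ := ![-2, 1, 3, 2, -1, -3] (n : Fin 6)

theorem clCycle_periodic : Periodic clCycle 6 := by
  intro n
  simp [clCycle]

theorem isCLTrajectory_clCycle : IsCLTrajectory clCycle := by
  intro n
  simp only [clCycle, Nat.cast_add, Nat.cast_one, Nat.cast_ofNat]
  generalize (n : Fin 6) = i
  fin_cases i <;> decide

theorem isCLTrajectory_const (c : ℤ) : IsCLTrajectory fun _ => c := by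
  intro n
  simp only [Int.even_iff, Int.odd_iff]
  omega

namespace IsCLTrajectory

/-- The recurrence with parities written as remainders and without division, a form that
`omega` can use directly. -/
theorem step (hx : IsCLTrajectory x) (n : ℕ) :
    (x n + x (n + 1)) % 2 = 0 ∧ 2 * x (n + 2) = x n + x (n + 1) ∨
      (x n + x (n + 1)) % 2 = 1 ∧ x (n + 2) = x (n + 1) - x n := by
  rcases Int.emod_two_eq_zero_or_one (x n + x (n + 1)) with h | h
  · have := (hx n).1 (Int.even_iff.mpr h)
    omega
  · exact Or.inr ⟨h, (hx n).2 (Int.odd_iff.mpr h)⟩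

theorem isCoprime (hx : IsCLTrajectory x) (h0 : IsCoprime (x 0) (x 1)) :
    ∀ n, IsCoprime (x n) (x (n + 1)) := by
  intro n
  induction n with
  | zero => exact h0
  | succ n ih =>
    obtain ⟨u, v, huv⟩ := ih
    rcases hx.step n with ⟨-, h⟩ | ⟨-, h⟩
    · exact ⟨v - u, 2 * u, by linear_combination huv + u * h⟩
    · exact ⟨v + u, -u, by linear_combination huv - u * h⟩

theorem shift_eq_shift (hx : IsCLTrajectory x) (hy : IsCLTrajectory y) {m k : ℕ}
    (h0 : x m = y k) (h1 : x (m + 1) = y (k + 1)) (j : ℕ) : x (m + j) = y (k + j) := by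
  suffices ∀ j, x (m + j) = y (k + j) ∧ x (m + j + 1) = y (k + j + 1) from (this j).1
  intro j
  induction j with
  | zero => exact ⟨h0, h1⟩
  | succ j ih =>
    refine ⟨ih.2, ?_⟩
    show x (m + j + 2) = y (k + j + 2)
    have := hx.step (m + j)
    have := hy.step (k + j)
    omega

theorem exists_odd_odd (hx : IsCLTrajectory x) (hodd : Odd (x 0) ∨ Odd (x 1)) :
    ∃ n, Odd (x n) ∧ Odd (x (n + 1)) := by
  have := hx.step 0
  have := hx.step 1
  simp only [Nat.reduceAdd] at *
  simp only [Int.odd_iff] at hodd ⊢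
  by_cases h : x 0 % 2 = 1 ∧ x 1 % 2 = 1
  · exact ⟨0, h⟩
  by_cases h' : x 1 % 2 = 1
  · exact ⟨1, show x 1 % 2 = 1 ∧ x 2 % 2 = 1 by omega⟩
  · exact ⟨2, show x 2 % 2 = 1 ∧ x 3 % 2 = 1 by omega⟩

/-- According to the parities of `x n` and `x (n + 1)`, the term `x (n + 3)` is the mean of two
terms of the window, or `-x n`, or `(x n - x (n + 1)) / 2`. -/
theorem abs_add_three_le_windowMax (hx : IsCLTrajectory x) (hodd : Odd (x n) ∨ Odd (x (n + 1))) :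
    |x (n + 3)| ≤ windowMax x n := by
  obtain ⟨h0, h1, h2⟩ := abs_window_le_windowMax x n
  rw [abs_le] at *
  have := hx.step n
  have := hx.step (n + 1)
  simp only [add_assoc, Nat.reduceAdd] at *
  simp only [Int.odd_iff] at hodd
  omega

theorem antitone_windowMax (hx : IsCLTrajectory x) (hodd : ∀ n, Odd (x n) ∨ Odd (x (n + 1))) :
    Antitone (windowMax x) := by
  refine antitone_nat_of_succ_le fun n => ?_
  obtain ⟨-, h1, h2⟩ := abs_window_le_windowMax x n
  exact max_le (max_le h1 h2) (hx.abs_add_three_le_windowMax (hodd n))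

/-- As `x n ≠ x (n + 1)`, the mean `x (n + 2)` is smaller in absolute value than `windowMax x n`,
and `x (n + 3)`, `x (n + 4)` are means or half-differences of two terms, one of them `x (n + 2)`. -/
theorem windowMax_lt (hx : IsCLTrajectory x) (ha : Odd (x n)) (hb : Odd (x (n + 1)))
    (hc : Odd (x (n + 2))) (hab : x n ≠ x (n + 1)) : windowMax x (n + 2) < windowMax x n := by
  obtain ⟨h0, h1, h2⟩ := abs_window_le_windowMax x n
  rw [abs_le] at h0 h1 h2
  have := hx.step n
  have := hx.step (n + 1)
  have := hx.step (n + 2)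
  simp only [add_assoc, Nat.reduceAdd] at *
  simp only [Int.odd_iff] at ha hb hc
  set M := windowMax x n
  simp only [windowMax, max_lt_iff, abs_lt, add_assoc, Nat.reduceAdd]
  omega

/-- `(3, -1)` is a left eigenvector, for the eigenvalue `1 / 2`, of the linear map
`(a, b) ↦ ((a - b) / 2, -b)` that sends `(x n, x (n + 1))` to `(x (n + 3), x (n + 4))`. -/
theorem halving_step (hx : IsCLTrajectory x) (ha : Odd (x n)) (hb : Odd (x (n + 1)))
    (hc : ¬Odd (x (n + 2))) :
    Odd (x (n + 3)) ∧ Odd (x (n + 4)) ∧ 2 * (3 * x (n + 3) - x (n + 4)) = 3 * x n - x (n + 1) := by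
  have := hx.step n
  have := hx.step (n + 1)
  have := hx.step (n + 2)
  simp only [add_assoc, Nat.reduceAdd] at *
  simp only [Int.odd_iff] at *
  omega

theorem eq_succ_of_odd_of_periodic (hx : IsCLTrajectory x)
    (hodd : ∀ n, Odd (x n) ∨ Odd (x (n + 1))) (hper : Periodic x p) (hp : 0 < p)
    (ha : Odd (x n)) (hb : Odd (x (n + 1))) (hc : Odd (x (n + 2))) : x n = x (n + 1) := by
  by_contra hab
  have hconst := (hx.antitone_windowMax hodd).eq_of_periodic (periodic_windowMax hper) hp
  exact (hx.windowMax_lt ha hb hc hab).ne ((hconst _).trans (hconst _).symm)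

theorem eq_one_or_eq_neg_one_of_odd (hx : IsCLTrajectory x)
    (hcop : ∀ n, IsCoprime (x n) (x (n + 1))) (hper : Periodic x p) (hp : 0 < p)
    (ha : Odd (x n)) (hb : Odd (x (n + 1))) (hc : Odd (x (n + 2))) :
    (∀ m, x m = 1) ∨ (∀ m, x m = -1) := by
  have hab := hx.eq_succ_of_odd_of_periodic (fun n => Int.odd_or_odd_of_isCoprime (hcop n))
    hper hp ha hb hc
  obtain ⟨r, hr⟩ := hper.exists_eq_shift (g := fun _ => x n) (k := 0) hp
    (hx.shift_eq_shift (isCLTrajectory_const (x n)) (k := 0) rfl hab.symm)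
  have hunit : IsUnit (x n) := isCoprime_self.mp (hab ▸ hcop n)
  rcases Int.isUnit_iff.mp hunit with h | h
  · exact Or.inl fun m => (hr m).trans h
  · exact Or.inr fun m => (hr m).trans h

theorem eq_three_mul_of_periodic (hx : IsCLTrajectory x) (hper : Periodic x p) (hp : 0 < p)
    (hno : ∀ m, Odd (x m) → Odd (x (m + 1)) → ¬Odd (x (m + 2)))
    (ha : Odd (x n)) (hb : Odd (x (n + 1))) : x (n + 1) = 3 * x n := by
  have halving : ∀ k, Odd (x (n + 3 * k)) ∧ Odd (x (n + 3 * k + 1)) ∧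
      2 ^ k * (3 * x (n + 3 * k) - x (n + 3 * k + 1)) = 3 * x n - x (n + 1) := by
    intro k
    induction k with
    | zero => simpa using ⟨ha, hb⟩
    | succ k ih =>
      obtain ⟨ha', hb', hk⟩ := ih
      obtain ⟨hd, he, hde⟩ := hx.halving_step ha' hb' (hno _ ha' hb')
      rw [show n + 3 * (k + 1) = n + 3 * k + 3 by ring]
      exact ⟨hd, he, by rw [pow_succ, mul_assoc, hde, hk]⟩
  have h3p : Periodic x (3 * p) := by simpa using hper.nat_mul 3
  obtain ⟨-, -, h⟩ := halving p
  rw [h3p n, Nat.add_right_comm, h3p (n + 1)] at h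
  have hzero := (mul_left_eq_self₀.mp h).resolve_left (one_lt_pow₀ one_lt_two hp.ne').ne'
  linarith

theorem exists_eq_clCycle (hx : IsCLTrajectory x) (hcop : ∀ n, IsCoprime (x n) (x (n + 1)))
    (hper : Periodic x p) (hp : 0 < p)
    (hno : ∀ m, Odd (x m) → Odd (x (m + 1)) → ¬Odd (x (m + 2))) :
    ∃ r, ∀ n, x n = clCycle (n + r) := by
  obtain ⟨n, ha, hb⟩ := hx.exists_odd_odd (Int.odd_or_odd_of_isCoprime (hcop 0))
  have h3 := hx.eq_three_mul_of_periodic hper hp hno ha hb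
  have hunit : IsUnit (x n) := isCoprime_self.mp (h3 ▸ hcop n).of_mul_right_right
  obtain ⟨k, hk0, hk1⟩ : ∃ k, x n = clCycle k ∧ x (n + 1) = clCycle (k + 1) := by
    rcases Int.isUnit_iff.mp hunit with h | h
    · exact ⟨1, by rw [h]; decide, by rw [h3, h]; decide⟩
    · exact ⟨4, by rw [h]; decide, by rw [h3, h]; decide⟩
  exact hper.exists_eq_shift hp (hx.shift_eq_shift isCLTrajectory_clCycle hk0 hk1)

end IsCLTrajectory

theorem cl_periodic_classification (x : ℕ → ℤ) (hx : IsCLTrajectory x)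
    (hgcd : Int.gcd (x 0) (x 1) = 1)
    (hper : ∃ p : ℕ, 0 < p ∧ ∀ n : ℕ, x (n + p) = x n) :
    (∀ n : ℕ, x n = 1) ∨
    (∀ n : ℕ, x n = -1) ∨
    ((∀ n : ℕ, x (n + 6) = x n) ∧
      ∃ r : Fin 6, ∀ i : Fin 6,
        x (i : ℕ) = ![(-2 : ℤ), 1, 3, 2, -1, -3] (i + r)) := by
  obtain ⟨p, hp, hper⟩ := hper
  have hcop := hx.isCoprime (Int.isCoprime_iff_gcd_eq_one.mpr hgcd)
  by_cases hodd : ∃ n, Odd (x n) ∧ Odd (x (n + 1)) ∧ Odd (x (n + 2))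
  · obtain ⟨n, ha, hb, hc⟩ := hodd
    exact (hx.eq_one_or_eq_neg_one_of_odd hcop hper hp ha hb hc).imp_right Or.inl
  · simp only [not_exists, not_and] at hodd
    obtain ⟨r, hr⟩ := hx.exists_eq_clCycle hcop hper hp hodd
    refine Or.inr (Or.inr ⟨fun n => ?_, r, fun i => ?_⟩)
    · rw [hr, hr, Nat.add_right_comm, clCycle_periodic]
    · rw [hr, clCycle, Nat.cast_add, Fin.cast_val_eq_self]
end
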